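/- Let r_1 < r_2 < r_3 and s_1 < s_2 in I (lexicographic order), and suppose A_t(r_1, s_1) = A_t(r_1, s_2) = A_t(r_2, s_2) = A_t(r_3, s_1) = 1. Then it is not possible that type(s_1, s_2) = type(r_1, r_3) and type(r_1, r_3) = type(r_1, r_2). -/

import Mathlib

/-!
Write `s₁ = r₁ + v[j₁]`, `s₂ = r₁ + v[j₂] = r₂ + v[j₃]` and `s₁ = r₃ + v[j₄]`, and let `p + 1` be
the common type. In block `p` the only nonzero entry of `v[j]` is the positive number
`⟨j_1,…,j_p⟩` at position `j_{p+1}`. Hence if `a < b` have type `p + 1` and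
`b - a = v[j'] - v[j]`, then `j` and `j'` agree before block `p` and `j'` is smaller than `j` at
block `p`: otherwise the first nonzero entry of `b - a` would be negative. For the pairs
`(s₁, s₂)`, `(r₁, r₃)`, `(r₁, r₂)` this puts `j₂` below `j₁`, `j₁` below `j₄` and `j₂` below `j₃`
at block `p`, so `r₃ - r₂ = v[j₁] + v[j₃] - v[j₂] - v[j₄]` vanishes before the position of `j₂`
in block `p` and is negative there, contradicting `r₂ < r₃`.
-/

/-- `⟨j_1,…,j_m⟩ = 1 + Σ_{i=1}^m (j_i−1)·k^{m−i}`, the injection `[k]^m → [k^m]`. -/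
def ang (k : ℕ) (l : List ℕ) : ℕ := l.foldl (fun acc j => acc * k + (j - 1)) 0 + 1

/-- The vector `v[j_1,…,j_t]`, given by a function `js : ℕ → ℕ` with `js r` being `j_{r+1}`.
Coordinates are flattened: flat coordinate `i` is coordinate `i % k` (0-indexed) of
block `i / k` (0-indexed).  It is 0 everywhere except at coordinate `j_r` (1-indexed) of
block `r` (1-indexed), where it equals `⟨j_1,…,j_{r−1}⟩`. -/
def vVec (k : ℕ) (js : ℕ → ℕ) (i : ℕ) : ℤ :=
  if i % k + 1 = js (i / k) then (ang k ((List.range (i / k)).map js) : ℤ) else 0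

/-- Membership in `I = {1,…,k^t}^{tk}`. -/
def memI (t k : ℕ) (a : Fin (t * k) → ℕ) : Prop := ∀ i, 1 ≤ a i ∧ a i ≤ k ^ t

/-- Lexicographic (strict) order on tuples. -/
def lexLt {N : ℕ} (a b : Fin N → ℕ) : Prop :=
  ∃ i : Fin N, (∀ j, j < i → a j = b j) ∧ a i < b i

/-- `js` codes an element `(j_1,…,j_t) ∈ [k]^t`. -/
def validJs (t k : ℕ) (js : ℕ → ℕ) : Prop := ∀ r, r < t → 1 ≤ js r ∧ js r ≤ k

/-- The entry `A_t(a,b)` is 1 iff `b − a ∈ S`, i.e. `b − a = v[j_1,…,j_t]` for some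
`(j_1,…,j_t) ∈ [k]^t`. -/
def AtOne (t k : ℕ) (a b : Fin (t * k) → ℕ) : Prop :=
  ∃ js : ℕ → ℕ, validJs t k js ∧
    ∀ i : Fin (t * k), (b i : ℤ) - (a i : ℤ) = vVec k js i.val

/-- `typeOf a b` is the (1-indexed) first block where `a` and `b` differ. -/
noncomputable def typeOf (t k : ℕ) (a b : Fin (t * k) → ℕ) : ℕ :=
  sInf {r | ∃ i : Fin (t * k), i.val / k + 1 = r ∧ a i ≠ b i}

section Coordinates

variable {i k p q : ℕ}

lemma mul_add_div_of_lt (hq : q < k) : (k * p + q) / k = p := by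
  rw [Nat.mul_add_div (by omega), Nat.div_eq_of_lt hq, add_zero]

lemma mul_add_mod_of_lt (hq : q < k) : (k * p + q) % k = q := by
  simp [Nat.mod_eq_of_lt hq]

lemma div_lt_or_of_lt_mul_add (hq : q < k) (hi : i < k * p + q) :
    i / k < p ∨ (i / k = p ∧ i % k < q) := by
  have hdiv := Nat.div_add_mod i k
  rcases lt_trichotomy (i / k) p with h | h | h
  · exact Or.inl h
  · rw [h] at hdiv
    omega
  · have := Nat.mul_le_mul_left k h
    rw [Nat.mul_succ] at this
    omega

end Coordinates

section Lex

variable {N : ℕ} {a b c : Fin N → ℕ}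

lemma lexLt_trans (hab : lexLt a b) (hbc : lexLt b c) : lexLt a c := by
  obtain ⟨i, hi, hai⟩ := hab
  obtain ⟨j, hj, hbj⟩ := hbc
  rcases lt_trichotomy i j with h | rfl | h
  · exact ⟨i, fun l hl => (hi l hl).trans (hj l (hl.trans h)), hj i h ▸ hai⟩
  · exact ⟨i, fun l hl => (hi l hl).trans (hj l hl), hai.trans hbj⟩
  · exact ⟨j, fun l hl => (hi l (hl.trans h)).trans (hj l hl), hi j h ▸ hbj⟩

lemma le_of_lexLt (hab : lexLt a b) {i : Fin N} (heq : ∀ j < i, a j = b j) : a i ≤ b i := by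
  obtain ⟨j, hj, hlt⟩ := hab
  rcases lt_trichotomy j i with h | rfl | h
  · exact absurd (heq j h) hlt.ne
  · exact hlt.le
  · exact (hj i h).le

lemma not_lexLt_of_lt_mul_add {t k p q : ℕ} {a b : Fin (t * k) → ℕ} (hp : p < t) (hq : q < k)
    (heq : ∀ i : Fin (t * k), (i : ℕ) < k * p + q → a i = b i)
    (hlt : ∀ i : Fin (t * k), (i : ℕ) = k * p + q → b i < a i) : ¬ lexLt a b := fun hab =>
  let i : Fin (t * k) := ⟨k * p + q, Nat.mul_add_lt_mul_of_lt_of_lt hp hq⟩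
  (hlt i rfl).not_ge (le_of_lexLt hab fun j hj => heq j hj)

end Lex

section Vectors

variable {k p q i : ℕ} {js js' : ℕ → ℕ}

lemma vVec_congr (h : ∀ r ≤ i / k, js r = js' r) : vVec k js i = vVec k js' i := by
  have hmap : (List.range (i / k)).map js = (List.range (i / k)).map js' :=
    List.map_congr_left fun r hr => h r (List.mem_range.mp hr).le
  simp only [vVec, h _ le_rfl, hmap]

lemma vVec_mul_add_of_ne (hq : q < k) (h : q + 1 ≠ js p) : vVec k js (k * p + q) = 0 := by
  rw [vVec, mul_add_div_of_lt hq, mul_add_mod_of_lt hq, if_neg h]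

lemma vVec_lead_pos (hjs : 1 ≤ js p ∧ js p ≤ k) : 0 < vVec k js (k * p + (js p - 1)) := by
  have hq : js p - 1 < k := by omega
  rw [vVec, mul_add_div_of_lt hq, mul_add_mod_of_lt hq, if_pos (by omega)]
  exact_mod_cast Nat.succ_pos _

lemma eq_of_vVec_lead_eq (hjs : 1 ≤ js p ∧ js p ≤ k)
    (h : vVec k js (k * p + (js p - 1)) = vVec k js' (k * p + (js p - 1))) : js p = js' p := by
  have hq : js p - 1 < k := by omega
  by_contra hne
  have := vVec_lead_pos hjs
  rw [h, vVec_mul_add_of_ne hq (by omega)] at this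
  exact this.false

lemma vVec_eq_of_lt_mul_add (hq : q < k) (hagree : ∀ r < p, js r = js' r)
    (hjs : q < js p) (hjs' : q < js' p) (hi : i < k * p + q) : vVec k js i = vVec k js' i := by
  rcases div_lt_or_of_lt_mul_add hq hi with hblock | ⟨hblock, hpos⟩
  · exact vVec_congr fun r hr => hagree r (hr.trans_lt hblock)
  · simp only [vVec, hblock, if_neg (show i % k + 1 ≠ js p by omega),
      if_neg (show i % k + 1 ≠ js' p by omega)]

end Vectors

lemma exists_typeOf_spec {t k : ℕ} {a b : Fin (t * k) → ℕ} (hab : lexLt a b) :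
    ∃ p < t, typeOf t k a b = p + 1 ∧
      (∀ i : Fin (t * k), (i : ℕ) / k < p → a i = b i) ∧
      ∃ i : Fin (t * k), (i : ℕ) / k = p ∧ a i ≠ b i := by
  set S := {r | ∃ i : Fin (t * k), (i : ℕ) / k + 1 = r ∧ a i ≠ b i}
  have htype : typeOf t k a b = sInf S := rfl
  obtain ⟨i₀, -, hi₀⟩ := hab
  obtain ⟨i, hi, hne⟩ : sInf S ∈ S := Nat.sInf_mem ⟨_, i₀, rfl, hi₀.ne⟩
  refine ⟨i / k, Nat.div_lt_of_lt_mul (Nat.mul_comm t k ▸ i.isLt), by omega, fun j hj => ?_,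
    i, rfl, hne⟩
  by_contra hj'
  have hmem : (j : ℕ) / k + 1 ∈ S := ⟨j, rfl, hj'⟩
  have := Nat.sInf_le hmem
  omega

lemma agree_and_lt_of_sub_eq_vVec_sub {t k p : ℕ} {a b : Fin (t * k) → ℕ} {js js' : ℕ → ℕ}
    (hv : validJs t k js) (hd : ∀ i, (b i : ℤ) - a i = vVec k js' i - vVec k js i)
    (hab : lexLt a b) (htype : typeOf t k a b = p + 1) :
    (∀ r < p, js r = js' r) ∧ js' p < js p := by
  obtain ⟨p', hp, hp', hbelow, i, hi, hne⟩ := exists_typeOf_spec hab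
  obtain rfl : p = p' := by omega
  have hagree : ∀ r < p, js r = js' r := fun r hr => by
    have hjs := hv r (hr.trans hp)
    let j : Fin (t * k) :=
      ⟨k * r + (js r - 1), Nat.mul_add_lt_mul_of_lt_of_lt (hr.trans hp) (by omega)⟩
    have := hd j
    rw [hbelow j (by simp only [j, mul_add_div_of_lt (show js r - 1 < k by omega), hr]), sub_self]
      at this
    exact eq_of_vVec_lead_eq hjs (sub_eq_zero.mp this.symm).symm
  have hdiff : js' p ≠ js p := fun heq => by
    have := hd i
    rw [vVec_congr (js' := js) fun r hr => by
      rcases (hr.trans_eq hi).lt_or_eq with hr | rfl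
      exacts [(hagree r hr).symm, heq]] at this
    omega
  refine ⟨hagree, lt_of_not_ge fun hle => ?_⟩
  have hjs := hv p hp
  refine not_lexLt_of_lt_mul_add hp (q := js p - 1) (by omega) (fun j hj => ?_) (fun j hj => ?_) hab
  · have := hd j
    rw [vVec_eq_of_lt_mul_add (by omega) (fun r hr => (hagree r hr).symm) (by omega) (by omega) hj]
      at this
    omega
  · have := hd j
    have hpos := vVec_lead_pos hjs
    rw [hj, vVec_mul_add_of_ne (by omega) (by omega)] at this
    omega

theorem stmt10_general (t k : ℕ)
    (r₁ r₂ r₃ s₁ s₂ : Fin (t * k) → ℕ)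
    (h12 : lexLt r₁ r₂) (h23 : lexLt r₂ r₃) (hs12 : lexLt s₁ s₂)
    (e1 : AtOne t k r₁ s₁) (e2 : AtOne t k r₁ s₂)
    (e3 : AtOne t k r₂ s₂) (e4 : AtOne t k r₃ s₁) :
    ¬ (typeOf t k s₁ s₂ = typeOf t k r₁ r₃ ∧
       typeOf t k r₁ r₃ = typeOf t k r₁ r₂) := by
  rintro ⟨hA, hB⟩
  obtain ⟨j₁, hv₁, hd₁⟩ := e1
  obtain ⟨j₂, hv₂, hd₂⟩ := e2
  obtain ⟨j₃, hv₃, hd₃⟩ := e3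
  obtain ⟨j₄, hv₄, hd₄⟩ := e4
  obtain ⟨p, hp, hs, -⟩ := exists_typeOf_spec hs12
  obtain ⟨agS, ltS⟩ := agree_and_lt_of_sub_eq_vVec_sub (js' := j₂) hv₁
    (fun i => by linarith [hd₁ i, hd₂ i]) hs12 hs
  obtain ⟨ag13, lt13⟩ := agree_and_lt_of_sub_eq_vVec_sub (js' := j₁) hv₄
    (fun i => by linarith [hd₁ i, hd₄ i]) (lexLt_trans h12 h23) (hA ▸ hs)
  obtain ⟨ag12, lt12⟩ := agree_and_lt_of_sub_eq_vVec_sub (js' := j₂) hv₃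
    (fun i => by linarith [hd₂ i, hd₃ i]) h12 (hB ▸ hA ▸ hs)
  have hj₂ := hv₂ p hp
  refine not_lexLt_of_lt_mul_add hp (q := j₂ p - 1) (by omega) (fun i hi => ?_) (fun i hi => ?_) h23
  · have e₁ := vVec_eq_of_lt_mul_add (by omega) agS (by omega) (by omega) hi
    have e₃ := vVec_eq_of_lt_mul_add (by omega) ag12 (by omega) (by omega) hi
    have e₄ := vVec_eq_of_lt_mul_add (by omega) ag13 (by omega) (by omega) hi
    linarith [hd₁ i, hd₂ i, hd₃ i, hd₄ i]
  · have hpos := vVec_lead_pos hj₂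
    have z₁ : vVec k j₁ (k * p + (j₂ p - 1)) = 0 := vVec_mul_add_of_ne (by omega) (by omega)
    have z₃ : vVec k j₃ (k * p + (j₂ p - 1)) = 0 := vVec_mul_add_of_ne (by omega) (by omega)
    have z₄ : vVec k j₄ (k * p + (j₂ p - 1)) = 0 := vVec_mul_add_of_ne (by omega) (by omega)
    have := hd₁ i; have := hd₂ i; have := hd₃ i; have := hd₄ i
    rw [hi] at *
    omega

/-- If `r₁ < r₂ < r₃`, `s₁ < s₂` and
`A_t(r₁,s₁) = A_t(r₁,s₂) = A_t(r₂,s₂) = A_t(r₃,s₁) = 1`, then it is impossible that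
`type(s₁,s₂) = type(r₁,r₃) = type(r₁,r₂)`. -/
theorem stmt10 (t k : ℕ) (ht : 2 ≤ t) (hk : 2 ≤ k)
    (r₁ r₂ r₃ s₁ s₂ : Fin (t * k) → ℕ)
    (h1 : memI t k r₁) (h2 : memI t k r₂) (h3 : memI t k r₃)
    (hs1 : memI t k s₁) (hs2 : memI t k s₂)
    (h12 : lexLt r₁ r₂) (h23 : lexLt r₂ r₃) (hs12 : lexLt s₁ s₂)
    (e1 : AtOne t k r₁ s₁) (e2 : AtOne t k r₁ s₂)
    (e3 : AtOne t k r₂ s₂) (e4 : AtOne t k r₃ s₁) :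
    ¬ (typeOf t k s₁ s₂ = typeOf t k r₁ r₃ ∧
       typeOf t k r₁ r₃ = typeOf t k r₁ r₂) :=
  stmt10_general t k r₁ r₂ r₃ s₁ s₂ h12 h23 hs12 e1 e2 e3 e4
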